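/- arXiv:1205.1980 — 3 statements merged into one kernel-verified Lean document; each statement's English description precedes it below -/
import Mathlib

section
/- The exponential weighting function r(z) = 1 - (1/z)(1 - z/(e^z - 1)) for z ≠ 0, with r(0) = 1/2, takes values in [0,1] for all z ∈ ℝ. -/
noncomputable def rExp (z : ℝ) : ℝ :=
  if z = 0 then 1/2 else 1 - (1/z) * (1 - z / (Real.exp z - 1))

theorem stmt_4 : ∀ z : ℝ, rExp z ∈ Set.Icc (0:ℝ) 1 := by
  intro z
  unfold rExp
  rcases eq_or_ne z 0 with h | h
  · simp [h]; norm_num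
  · simp only [h, if_false]
    have h1 : z + 1 < Real.exp z := Real.add_one_lt_exp h
    have h2 : -z + 1 < Real.exp (-z) := Real.add_one_lt_exp (neg_ne_zero.mpr h)
    have h3 : Real.exp (-z) * Real.exp z = 1 := by
      rw [← Real.exp_add]; simp
    have hp : (0:ℝ) < Real.exp z := Real.exp_pos z
    have hp' : (0:ℝ) < Real.exp (-z) := Real.exp_pos _
    have hzE : 0 < z * (Real.exp z - 1) := by
      rcases lt_or_gt_of_ne h with hz | hz
      · have : Real.exp z < 1 := by nlinarith
        exact mul_pos_of_neg_of_neg hz (by linarith)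
      · exact mul_pos hz (by nlinarith)
    have hE : Real.exp z - 1 ≠ 0 := by
      intro hc
      rw [hc, mul_zero] at hzE
      exact lt_irrefl _ hzE
    have heq : 1 - (1/z) * (1 - z / (Real.exp z - 1))
        = (1 - Real.exp z * (1 - z)) / (z * (Real.exp z - 1)) := by
      field_simp
      ring
    rw [heq]
    constructor
    · apply div_nonneg _ hzE.le
      nlinarith
    · rw [div_le_one hzE]
      nlinarith
end

section
/- The exponential weighting function r(z) = 1 - (1/z)(1 - z/(e^z - 1)) (with r(0) = 1/2) is monotone increasing on ℝ. -/
open Real Set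

theorem Monotone.of_monotoneOn_Iio_of_monotoneOn_Ioi {α β : Type*} [LinearOrder α] [Preorder β]
    {f : α → β} {a : α} (hl : MonotoneOn f (Iio a)) (hr : MonotoneOn f (Ioi a))
    (hla : ∀ x < a, f x ≤ f a) (hra : ∀ x, a < x → f a ≤ f x) : Monotone f := by
  refine MonotoneOn.Iic_union_Ici (a := a) ?_ ?_
  · intro x _ y hy hxy
    rcases (mem_Iic.mp hy).eq_or_lt with rfl | hya
    · rcases hxy.eq_or_lt with rfl | hxa
      · rfl
      · exact hla x hxa
    · exact hl (hxy.trans_lt hya) hya hxy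
  · intro x hx y _ hxy
    rcases (mem_Ici.mp hx).eq_or_lt with rfl | hax
    · rcases hxy.eq_or_lt with rfl | hay
      · rfl
      · exact hra y hay
    · exact hr hax (hax.trans_le hxy) hxy

lemma sq_le_sinh_sq (x : ℝ) : x ^ 2 ≤ sinh x ^ 2 :=
  sq_le_sq.mpr (by rw [abs_sinh]; exact self_le_sinh_iff.mpr (abs_nonneg x))

lemma sq_mul_exp_le_sq_exp_sub_one (z : ℝ) : z ^ 2 * exp z ≤ (exp z - 1) ^ 2 := by
  have hexp : exp z = exp (z / 2) ^ 2 := by rw [← exp_nat_mul]; ring_nf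
  calc z ^ 2 * exp z = 4 * exp z * (z / 2) ^ 2 := by ring
    _ ≤ 4 * exp z * sinh (z / 2) ^ 2 := by gcongr ?_ * ?_; exact sq_le_sinh_sq _
    _ = (exp z - 1) ^ 2 := by
      rw [sinh_eq, exp_neg, hexp]
      field_simp
      ring

lemma one_sub_mul_exp_le_one (z : ℝ) : (1 - z) * exp z ≤ 1 := by
  calc (1 - z) * exp z ≤ exp (-z) * exp z := by
        gcongr; linarith [add_one_le_exp (-z)]
    _ = 1 := by rw [← exp_add, neg_add_cancel, exp_zero]

lemma monotone_two_add_sub_two_sub_mul_exp : Monotone fun z : ℝ ↦ 2 + z - (2 - z) * exp z := by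
  refine monotone_of_hasDerivAt_nonneg (f' := fun z ↦ 1 + (z - 1) * exp z) (fun z ↦ ?_)
    (fun z ↦ show 0 ≤ 1 + (z - 1) * exp z by linarith [one_sub_mul_exp_le_one z])
  exact (((hasDerivAt_id' z).const_add 2).sub
    (((hasDerivAt_id' z).const_sub 2).mul (hasDerivAt_exp z))).congr_deriv (by ring)

lemma exp_sub_one_ne_zero {z : ℝ} (hz : z ≠ 0) : exp z - 1 ≠ 0 :=
  sub_ne_zero.mpr (exp_eq_one_iff z |>.not.mpr hz)

lemma mul_exp_sub_one_pos {z : ℝ} (hz : z ≠ 0) : 0 < z * (exp z - 1) := by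
  rcases hz.lt_or_gt with hz | hz
  · exact mul_pos_of_neg_of_neg hz (sub_neg.mpr (exp_lt_one_iff.mpr hz))
  · exact mul_pos hz (sub_pos.mpr (one_lt_exp_iff.mpr hz))

lemma rExp_zero : rExp 0 = 1 / 2 := if_pos rfl

lemma rExp_of_ne_zero {z : ℝ} (hz : z ≠ 0) : rExp z = 1 - z⁻¹ + (exp z - 1)⁻¹ := by
  have := exp_sub_one_ne_zero hz
  rw [rExp, if_neg hz]
  field_simp
  ring

lemma hasDerivAt_rExp {z : ℝ} (hz : z ≠ 0) :
    HasDerivAt rExp ((z ^ 2)⁻¹ - exp z / (exp z - 1) ^ 2) z := by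
  have hderiv := ((hasDerivAt_inv hz).const_sub 1).add
    (((hasDerivAt_exp z).sub_const 1).inv (exp_sub_one_ne_zero hz))
  refine (hderiv.congr_deriv (by ring)).congr_of_eventuallyEq ?_
  filter_upwards [isOpen_ne.mem_nhds hz] with x hx
  exact rExp_of_ne_zero hx

lemma monotoneOn_rExp {D : Set ℝ} (hD : Convex ℝ D) (h0 : (0 : ℝ) ∉ D) : MonotoneOn rExp D := by
  have hne : ∀ x ∈ D, x ≠ 0 := fun x hx h ↦ h0 (h ▸ hx)
  refine monotoneOn_of_hasDerivWithinAt_nonneg hD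
    (fun x hx ↦ (hasDerivAt_rExp (hne x hx)).continuousAt.continuousWithinAt)
    (fun x hx ↦ (hasDerivAt_rExp (hne x (interior_subset hx))).hasDerivWithinAt)
    (fun x hx ↦ ?_)
  have hx := hne x (interior_subset hx)
  rw [sub_nonneg, div_le_iff₀ (by positivity [exp_sub_one_ne_zero hx]), ← div_eq_inv_mul,
    le_div_iff₀ (by positivity)]
  linarith [sq_mul_exp_le_sq_exp_sub_one x]

lemma rExp_sub_half {z : ℝ} (hz : z ≠ 0) :
    rExp z - 1 / 2 = (2 + z - (2 - z) * exp z) / (2 * (z * (exp z - 1))) := by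
  have := exp_sub_one_ne_zero hz
  rw [rExp_of_ne_zero hz]
  field_simp
  ring

lemma rExp_le_half {z : ℝ} (hz : z < 0) : rExp z ≤ 1 / 2 := by
  have hnum : 2 + z - (2 - z) * exp z ≤ 0 := by
    simpa using monotone_two_add_sub_two_sub_mul_exp hz.le
  have := rExp_sub_half hz.ne
  have := div_nonpos_of_nonpos_of_nonneg hnum (mul_pos two_pos (mul_exp_sub_one_pos hz.ne)).le
  linarith

lemma half_le_rExp {z : ℝ} (hz : 0 < z) : 1 / 2 ≤ rExp z := by
  have hnum : 0 ≤ 2 + z - (2 - z) * exp z := by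
    simpa using monotone_two_add_sub_two_sub_mul_exp hz.le
  have := rExp_sub_half hz.ne'
  have := div_nonneg hnum (mul_pos two_pos (mul_exp_sub_one_pos hz.ne')).le
  linarith

theorem stmt_7 : Monotone rExp :=
  Monotone.of_monotoneOn_Iio_of_monotoneOn_Ioi
    (monotoneOn_rExp (convex_Iio 0) self_notMem_Iio) (monotoneOn_rExp (convex_Ioi 0) self_notMem_Ioi)
    (fun _ hx ↦ rExp_zero ▸ rExp_le_half hx) (fun _ hx ↦ rExp_zero ▸ half_le_rExp hx)
end

section
/- Under the assumptions of the DWR framework for finite volume methods — u solves a(u;v) + a_δ(u;v) = ⟨f,v⟩ for all v ∈ V, z solves the dual problem a'(u;w,z) + a_δ'(u;w,z) = j'(u;w) for all w ∈ V, u_T ∈ V_T solves the discrete problem a_T(u_T;v) = ⟨f_T,v⟩ for all v ∈ V_T, z_T ∈ V_T solves a'(u_T;w,z_T) = j'(u_T;w) for all w ∈ V_T, and L(x) := j(u) + ⟨f,z⟩ - a(u;z) - a_δ(u;z) is three times differentiable — the error in the functional satisfies: j(u) - j(u_T) = -a_δ(u_T;z_T) + [⟨f,z_T⟩ - ⟨f_T,z_T⟩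 - a(u_T;z_T) + a_T(u_T;z_T)] + (1/2)[ϱ(u_T; z - i_T z) + ϱ*(u_T; z_T, u - i_T u)] - (1/2)[a_δ(u_T; e_z) + a_δ'(u_T; e_u, z_T)] - (1/2)ϱ(u_T; z_T - i_T z) - (1/2)R, where ϱ(u_T;v) := ⟨f,v⟩ - a(u_T;v), ϱ*(u_T;z_T,w) := j'(u_T;w) - a'(u_T;w,z_T), e = (e_u,e_z) = (u - u_T, z - z_T), i_T : V → V_T is any interpolation operator, and R = ∫₀¹ σ(1-σ) L'''(x_T + σe)(e,e,e) dσ with x_T = (u_T, z_T), x = (u,z). -/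
/-!
Restricted to the segment `s ↦ x_T + s e`, the Lagrangian becomes a `C³` function `φ` with
`φ 1 = j u` (the primal equation tested with `z`), `φ' 1 = 0` (the primal and dual equations
say that `x` is a stationary point of `L`) and `φ' 0 = L'(x_T) e`. The trapezoidal rule with
its error in Peano form, `φ 1 - φ 0 = (φ' 0 + φ' 1) / 2 - ½ ∫₀¹ σ (1 - σ) φ''' σ dσ`, turns
`j u - j u_T` into `½ L'(x_T) e` up to the remainder. Splitting `e` at the interpolants
`(i_T u, i_T z)` and using the discrete dual equation on `i_T u - u_T ∈ V_T` and the discrete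
primal equation on `z_T` gives the residuals of the statement.
-/

open MeasureTheory

theorem iteratedDeriv_comp_add_smul {E F : Type*} [NormedAddCommGroup E] [NormedSpace ℝ E]
    [NormedAddCommGroup F] [NormedSpace ℝ F] {f : E → F} {n : ℕ} (hf : ContDiff ℝ n f)
    (c e : E) (σ : ℝ) :
    iteratedDeriv n (fun t : ℝ => f (c + t • e)) σ
      = iteratedFDeriv ℝ n f (c + σ • e) (fun _ => e) := by
  have hcomp : (fun t : ℝ => f (c + t • e))
      = (fun x => f (c + x)) ∘ ContinuousLinearMap.toSpanSingleton ℝ e := rfl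
  rw [hcomp, iteratedDeriv_eq_iteratedFDeriv,
    ContinuousLinearMap.iteratedFDeriv_comp_right _ (f := fun x => f (c + x))
      (hf.comp (contDiff_const.add contDiff_id)) _ le_rfl,
    iteratedFDeriv_comp_add_left']
  simp

theorem integral_sub_mul_sub_mul_iteratedDeriv_three {φ : ℝ → ℝ} (hφ : ContDiff ℝ 3 φ)
    (a b : ℝ) :
    ∫ σ in a..b, (σ - a) * (b - σ) * iteratedDeriv 3 φ σ
      = (b - a) * (deriv φ a + deriv φ b) - 2 * (φ b - φ a) := by
  have h1 : ContDiff ℝ 2 (deriv φ) := hφ.deriv' (n := 2)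
  have h2 : ContDiff ℝ 1 (deriv (deriv φ)) := h1.deriv' (n := 1)
  have h3 : Continuous (deriv (deriv (deriv φ))) := h2.continuous_deriv le_rfl
  have hφ''' : iteratedDeriv 3 φ = deriv (deriv (deriv φ)) := by
    simp only [iteratedDeriv_eq_iterate, Function.iterate_succ, Function.iterate_zero,
      Function.comp_apply, id]
  have hweight (x : ℝ) : HasDerivAt (fun σ => (σ - a) * (b - σ)) (a + b - 2 * x) x :=
    (((hasDerivAt_id' x).sub_const a).fun_mul
      ((hasDerivAt_const x b).fun_sub (hasDerivAt_id' x))).congr_deriv (by ring)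
  have hlinear (x : ℝ) : HasDerivAt (fun σ => a + b - 2 * σ) (-2) x := by
    simpa using ((hasDerivAt_id x).const_mul 2).const_sub (a + b)
  have ibp₁ : ∫ σ in a..b, (σ - a) * (b - σ) * deriv (deriv (deriv φ)) σ
      = -∫ σ in a..b, (a + b - 2 * σ) * deriv (deriv φ) σ := by
    rw [intervalIntegral.integral_mul_deriv_eq_deriv_mul (fun x _ => hweight x)
      (fun x _ => (h2.differentiable one_ne_zero x).hasDerivAt)
      ((by fun_prop : Continuous fun x : ℝ => a + b - 2 * x).intervalIntegrable a b)
      (h3.intervalIntegrable a b)]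
    simp
  have ibp₂ : ∫ σ in a..b, (a + b - 2 * σ) * deriv (deriv φ) σ
      = (a - b) * deriv φ b - (b - a) * deriv φ a + 2 * ∫ σ in a..b, deriv φ σ := by
    rw [intervalIntegral.integral_mul_deriv_eq_deriv_mul (fun x _ => hlinear x)
      (fun x _ => (h1.differentiable two_ne_zero x).hasDerivAt)
      intervalIntegrable_const (h2.continuous.intervalIntegrable a b),
      intervalIntegral.integral_const_mul]
    ring
  have ftc : ∫ σ in a..b, deriv φ σ = φ b - φ a :=
    intervalIntegral.integral_deriv_eq_sub (fun x _ => hφ.differentiable three_ne_zero x)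
      (h1.continuous.intervalIntegrable a b)
  rw [hφ''', ibp₁, ibp₂, ftc]
  ring

theorem sub_eq_half_deriv_sub_integral_iteratedFDeriv {E : Type*} [NormedAddCommGroup E]
    [NormedSpace ℝ E] {g : E → ℝ} (hg : ContDiff ℝ 3 g) (x e : E)
    (hstat : HasDerivAt (fun s : ℝ => g (x + s • e)) 0 1) :
    g (x + e) - g x = deriv (fun s : ℝ => g (x + s • e)) 0 / 2
      - (1/2) * ∫ σ in (0:ℝ)..1, σ * (1 - σ) * iteratedFDeriv ℝ 3 g (x + σ • e) ![e, e, e] := by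
  have hφ : ContDiff ℝ 3 (fun s : ℝ => g (x + s • e)) :=
    hg.comp (contDiff_const.add (contDiff_id.smul contDiff_const))
  have hconst : ![e, e, e] = fun _ => e := by
    funext i; fin_cases i <;> rfl
  have htrapezoid := integral_sub_mul_sub_mul_iteratedDeriv_three hφ 0 1
  simp only [sub_zero, zero_smul, add_zero, one_smul, hstat.deriv,
    iteratedDeriv_comp_add_smul hg] at htrapezoid
  rw [hconst]
  linarith

section Lagrangian

variable {V : Type*} [NormedAddCommGroup V] [NormedSpace ℝ V]

theorem hasDerivAt_const_add_smul (p w : V) (t : ℝ) :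
    HasDerivAt (fun s : ℝ => p + s • w) w t := by
  simpa using ((hasDerivAt_id t).smul_const w).const_add p

theorem IsLinearMap.hasDerivAt_comp_const_add_smul {f : V → ℝ} (hf : IsLinearMap ℝ f)
    (q w : V) (t : ℝ) : HasDerivAt (fun s : ℝ => f (q + s • w)) (f w) t := by
  have hline : (fun s : ℝ => f (q + s • w)) = fun s => f q + s * f w := by
    funext s
    rw [hf.map_add, hf.map_smul, smul_eq_mul]
  rw [hline]
  simpa using ((hasDerivAt_id t).mul_const (f w)).const_add (f q)

theorem hasDerivAt_form_comp_const_add_smul {a : V → V → ℝ} (hlin : ∀ x, IsLinearMap ℝ (a x))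
    (hdiff : ∀ v, Differentiable ℝ (fun x => a x v)) (p q w₁ w₂ : V) (t : ℝ) :
    HasDerivAt (fun s : ℝ => a (p + s • w₁) (q + s • w₂))
      (fderiv ℝ (fun x => a x (q + t • w₂)) (p + t • w₁) w₁ + a (p + t • w₁) w₂) t := by
  have hsplit (s : ℝ) : (fun x => a x (q + s • w₂)) = fun x => a x q + s * a x w₂ := by
    funext x
    rw [(hlin x).map_add, (hlin x).map_smul, smul_eq_mul]
  have hq := (hdiff q _).hasFDerivAt.comp_hasDerivAt t (hasDerivAt_const_add_smul p w₁ t)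
  have hw := (hdiff w₂ _).hasFDerivAt.comp_hasDerivAt t (hasDerivAt_const_add_smul p w₁ t)
  have hderiv : fderiv ℝ (fun x => a x (q + t • w₂)) (p + t • w₁)
      = fderiv ℝ (fun x => a x q) (p + t • w₁)
        + t • fderiv ℝ (fun x => a x w₂) (p + t • w₁) := by
    rw [hsplit, fderiv_fun_add (hdiff q _) ((hdiff w₂ _).const_mul t),
      fderiv_const_mul (hdiff w₂ _)]
  have hfun : (fun s : ℝ => a (p + s • w₁) (q + s • w₂))
      = fun s => a (p + s • w₁) q + s * a (p + s • w₁) w₂ :=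
    funext fun s => congrFun (hsplit s) _
  rw [hfun, hderiv]
  refine (hq.fun_add ((hasDerivAt_id' t).fun_mul hw)).congr_deriv ?_
  simp only [Function.comp_apply, one_mul, add_apply, smul_apply, smul_eq_mul]
  ring

def lagrangian (j f : V → ℝ) (a aδ : V → V → ℝ) (x : V × V) : ℝ :=
  j x.1 + f x.2 - a x.1 x.2 - aδ x.1 x.2

theorem hasDerivAt_lagrangian_comp_const_add_smul {j f : V → ℝ} {a aδ : V → V → ℝ}
    (hj : Differentiable ℝ j) (hf : IsLinearMap ℝ f)
    (halin : ∀ x, IsLinearMap ℝ (a x)) (hδlin : ∀ x, IsLinearMap ℝ (aδ x))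
    (ha : ∀ v, Differentiable ℝ (fun x => a x v))
    (haδ : ∀ v, Differentiable ℝ (fun x => aδ x v)) (x w : V × V) (t : ℝ) :
    HasDerivAt (fun s : ℝ => lagrangian j f a aδ (x + s • w))
      (fderiv ℝ j (x.1 + t • w.1) w.1 + f w.2
        - (fderiv ℝ (fun y => a y (x.2 + t • w.2)) (x.1 + t • w.1) w.1
            + a (x.1 + t • w.1) w.2)
        - (fderiv ℝ (fun y => aδ y (x.2 + t • w.2)) (x.1 + t • w.1) w.1
            + aδ (x.1 + t • w.1) w.2)) t := by
  simp only [lagrangian, Prod.fst_add, Prod.snd_add, Prod.smul_fst, Prod.smul_snd]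
  exact ((((hj _).hasFDerivAt.comp_hasDerivAt t (hasDerivAt_const_add_smul x.1 w.1 t)).fun_add
    (hf.hasDerivAt_comp_const_add_smul x.2 w.2 t)).fun_sub
    (hasDerivAt_form_comp_const_add_smul halin ha x.1 x.2 w.1 w.2 t)).fun_sub
    (hasDerivAt_form_comp_const_add_smul hδlin haδ x.1 x.2 w.1 w.2 t)

end Lagrangian

theorem stmt_15_general {V : Type*} [NormedAddCommGroup V] [NormedSpace ℝ V]
    (VT : Submodule ℝ V)
    (a aδ aT : V → V → ℝ) (f fT : V → ℝ) (j : V → ℝ)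
    -- linearity in the second argument
    (halin : ∀ u, IsLinearMap ℝ (a u)) (hδlin : ∀ u, IsLinearMap ℝ (aδ u))
    (hflin : IsLinearMap ℝ f)
    -- the Lagrangian and its differentiability
    (L : V × V → ℝ)
    (hLdef : ∀ p : V × V, L p = j p.1 + f p.2 - a p.1 p.2 - aδ p.1 p.2)
    (hL : ContDiff ℝ 3 L)
    -- differentiability in the first argument
    (ha : ∀ v, Differentiable ℝ (fun t => a t v))
    (haδ : ∀ v, Differentiable ℝ (fun t => aδ t v))
    (hj : Differentiable ℝ j)
    -- primal and dual solutions of the accurate problem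
    (u z : V)
    (hu : ∀ v : V, a u v + aδ u v = f v)
    (hz : ∀ w : V, fderiv ℝ (fun t => a t z) u w + fderiv ℝ (fun t => aδ t z) u w
            = fderiv ℝ j u w)
    -- discrete primal and dual solutions
    (uT zT : V) (huT : uT ∈ VT) (hzT : zT ∈ VT)
    (hdiscr : ∀ v ∈ VT, aT uT v = fT v)
    (hdual : ∀ w ∈ VT, fderiv ℝ (fun t => a t zT) uT w = fderiv ℝ j uT w)
    -- interpolation operator
    (iT : V → V) (hiT : ∀ v : V, iT v ∈ VT) :
    j u - j uT
      = -aδ uT zT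
        + (f zT - fT zT - a uT zT + aT uT zT)
        + (1/2) * ((f (z - iT z) - a uT (z - iT z))
            + (fderiv ℝ j uT (u - iT u) - fderiv ℝ (fun t => a t zT) uT (u - iT u)))
        - (1/2) * (aδ uT (z - zT) + fderiv ℝ (fun t => aδ t zT) uT (u - uT))
        - (1/2) * (f (zT - iT z) - a uT (zT - iT z))
        - (1/2) * ∫ σ in (0:ℝ)..1,
            σ * (1 - σ) * iteratedFDeriv ℝ 3 L ((uT, zT) + σ • ((u - uT, z - zT) : V × V))
              ![(u - uT, z - zT), (u - uT, z - zT), (u - uT, z - zT)] := by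
  obtain rfl : L = lagrangian j f a aδ := funext hLdef
  set e : V × V := (u - uT, z - zT)
  have hφ' := hasDerivAt_lagrangian_comp_const_add_smul hj hflin halin hδlin ha haδ (uT, zT) e
  have hstat : HasDerivAt (fun s : ℝ => lagrangian j f a aδ ((uT, zT) + s • e)) 0 1 := by
    refine (hφ' 1).congr_deriv ?_
    simp only [one_smul, e, add_sub_cancel]
    linarith [hu (z - zT), hz (u - uT)]
  have hφ'0 : deriv (fun s : ℝ => lagrangian j f a aδ ((uT, zT) + s • e)) 0
      = fderiv ℝ j uT (u - uT) + f (z - zT)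
        - (fderiv ℝ (fun y => a y zT) uT (u - uT) + a uT (z - zT))
        - (fderiv ℝ (fun y => aδ y zT) uT (u - uT) + aδ uT (z - zT)) :=
    (hφ' 0).deriv.trans (by simp only [zero_smul, add_zero, e])
  have hx : lagrangian j f a aδ ((uT, zT) + e) = j u := by
    simp only [e, lagrangian, Prod.mk_add_mk, add_sub_cancel]
    linarith [hu z]
  have hxT : lagrangian j f a aδ (uT, zT) = j uT + f zT - a uT zT - aδ uT zT := rfl
  have hgalerkin : fderiv ℝ (fun t => a t zT) uT (iT u - uT) = fderiv ℝ j uT (iT u - uT) :=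
    hdual _ (VT.sub_mem (hiT u) huT)
  have hfT : aT uT zT = fT zT := hdiscr zT hzT
  have hf_split : f (z - iT z) - f (zT - iT z) = f (z - zT) := by
    rw [← hflin.map_sub, sub_sub_sub_cancel_right]
  have ha_split : a uT (z - iT z) - a uT (zT - iT z) = a uT (z - zT) := by
    rw [← (halin uT).map_sub, sub_sub_sub_cancel_right]
  have hj_split : fderiv ℝ j uT (u - uT) - fderiv ℝ j uT (iT u - uT)
      = fderiv ℝ j uT (u - iT u) := by
    rw [← map_sub, sub_sub_sub_cancel_right]
  have ha'_split : fderiv ℝ (fun t => a t zT) uT (u - uT)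
        - fderiv ℝ (fun t => a t zT) uT (iT u - uT)
      = fderiv ℝ (fun t => a t zT) uT (u - iT u) := by
    rw [← map_sub, sub_sub_sub_cancel_right]
  linarith [sub_eq_half_deriv_sub_integral_iteratedFDeriv hL (uT, zT) e hstat]

theorem stmt_15 {V : Type*} [NormedAddCommGroup V] [NormedSpace ℝ V] [CompleteSpace V]
    (VT : Submodule ℝ V)
    (a aδ aT : V → V → ℝ) (f fT : V → ℝ) (j : V → ℝ)
    -- linearity in the second argument
    (halin : ∀ u, IsLinearMap ℝ (a u)) (hδlin : ∀ u, IsLinearMap ℝ (aδ u))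
    (hflin : IsLinearMap ℝ f) (hfTlin : IsLinearMap ℝ fT)
    -- the Lagrangian and its differentiability
    (L : V × V → ℝ)
    (hLdef : ∀ p : V × V, L p = j p.1 + f p.2 - a p.1 p.2 - aδ p.1 p.2)
    (hL : ContDiff ℝ 3 L)
    -- differentiability in the first argument
    (ha : ∀ v, Differentiable ℝ (fun t => a t v))
    (haδ : ∀ v, Differentiable ℝ (fun t => aδ t v))
    (hj : Differentiable ℝ j)
    -- primal and dual solutions of the accurate problem
    (u z : V)
    (hu : ∀ v : V, a u v + aδ u v = f v)
    (hz : ∀ w : V, fderiv ℝ (fun t => a t z) u w + fderiv ℝ (fun t => aδ t z) u w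
            = fderiv ℝ j u w)
    -- discrete primal and dual solutions
    (uT zT : V) (huT : uT ∈ VT) (hzT : zT ∈ VT)
    (hdiscr : ∀ v ∈ VT, aT uT v = fT v)
    (hdual : ∀ w ∈ VT, fderiv ℝ (fun t => a t zT) uT w = fderiv ℝ j uT w)
    -- interpolation operator
    (iT : V → V) (hiT : ∀ v : V, iT v ∈ VT) :
    j u - j uT
      = -aδ uT zT
        + (f zT - fT zT - a uT zT + aT uT zT)
        + (1/2) * ((f (z - iT z) - a uT (z - iT z))
            + (fderiv ℝ j uT (u - iT u) - fderiv ℝ (fun t => a t zT) uT (u - iT u)))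
        - (1/2) * (aδ uT (z - zT) + fderiv ℝ (fun t => aδ t zT) uT (u - uT))
        - (1/2) * (f (zT - iT z) - a uT (zT - iT z))
        - (1/2) * ∫ σ in (0:ℝ)..1,
            σ * (1 - σ) * iteratedFDeriv ℝ 3 L ((uT, zT) + σ • ((u - uT, z - zT) : V × V))
              ![(u - uT, z - zT), (u - uT, z - zT), (u - uT, z - zT)] :=
  stmt_15_general VT a aδ aT f fT j halin hδlin hflin L hLdef hL ha haδ hj u z hu hz uT zT huT hzT
    hdiscr hdual iT hiT
end
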